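/- Algebraic embedding of the stochastic switched system (derivation of the stochastic lifted dynamics): let f_i : Fin M × Fin N → Fin N for i ∈ Fin ℓ have structure matrices L_i (logical matrices with L_i(δ_M^γ ⊗ δ_N^θ) = δ_N^{f_i(γ,θ)}), let L̃ = [L_1 ⋯ L_ℓ] ∈ ℝ^{N×ℓMN} be their horizontal concatenation, let A_j ∈ ℝ^{n×n}, B_j ∈ ℝ^{n×m}, F_j ∈ ℝ^{n×r} for j ∈ Fin N, and let Ã, B̃, F̃ be the horizontal concatenations [A_1 ⋯ A_N], [B_1 ⋯ B_N], [F_1 ⋯ F_N]. With Φ_N the N-th power-reducing matrix, define 𝐀̃ := (L̃ ⊗ I_n)(I_{ℓMN} ⊗ Ã)((I_{ℓM} ⊗ Φ_N) ⊗ I_n), 𝐁̃ := (L̃ ⊗ I_n)(I_{ℓMN} ⊗ B̃)((I_{ℓM} ⊗ Φ_N) ⊗ I_m), and 𝐅̃ := (L̃ ⊗ I_n)(I_{ℓMN} ⊗ F̃)((I_{ℓM} ⊗ Φ_N) ⊗ I_r). Then for all i ∈ Fin ℓ, γ ∈ Fin M, θ ∈ Fin N, x ∈ ℝⁿ, u ∈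 ℝ^m, w ∈ ℝ^r: δ_N^{f_i(γ,θ)} ⊗ (A_θ x + B_θ u + F_θ w) = 𝐀̃ (δ_ℓ^i ⊗ δ_M^γ ⊗ δ_N^θ ⊗ x) + 𝐁̃ (δ_ℓ^i ⊗ δ_M^γ ⊗ δ_N^θ ⊗ u) + 𝐅̃ (δ_ℓ^i ⊗ δ_M^γ ⊗ δ_N^θ ⊗ w). -/

import Mathlib

open Matrix

noncomputable section

/-- Kronecker product of real matrices with `Fin`-indexed sizes, indices identified
via the lexicographic equivalence `Fin a × Fin b ≃ Fin (a*b)`. -/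
def kron {a b c d : ℕ} (A : Matrix (Fin a) (Fin b) ℝ) (B : Matrix (Fin c) (Fin d) ℝ) :
    Matrix (Fin (a * c)) (Fin (b * d)) ℝ := fun i j =>
  A (finProdFinEquiv.symm i).1 (finProdFinEquiv.symm j).1 *
    B (finProdFinEquiv.symm i).2 (finProdFinEquiv.symm j).2

/-- Recast a matrix along equalities of its `Fin` dimensions. -/
def castM {a b c d : ℕ} (h₁ : a = b) (h₂ : c = d) (A : Matrix (Fin a) (Fin c) ℝ) :
    Matrix (Fin b) (Fin d) ℝ := fun i j => A (finCongr h₁.symm i) (finCongr h₂.symm j)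

/-- The `i`-th standard basis vector of `ℝ^k`, as a `k × 1` column matrix. -/
def eVec (k : ℕ) (i : Fin k) : Matrix (Fin k) (Fin 1) ℝ := fun j _ => if j = i then 1 else 0

/-- A vector of `ℝ^k`, as a `k × 1` column matrix. -/
def colM {k : ℕ} (x : Fin k → ℝ) : Matrix (Fin k) (Fin 1) ℝ := fun j _ => x j

/-- A real matrix is a *logical matrix* if each of its columns is a standard basis vector. -/
def IsLogicalMatrix {a b : ℕ} (L : Matrix (Fin a) (Fin b) ℝ) : Prop :=
  ∀ j : Fin b, ∃ i : Fin a, ∀ r : Fin a, L r j = if r = i then 1 else 0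

/-- The `N`-th power-reducing matrix `Φ_N ∈ ℝ^{N² × N}`, whose `j`-th column is
`δ_N^j ⊗ δ_N^j`. -/
def powerReducing (N : ℕ) : Matrix (Fin (N * N)) (Fin N) ℝ := fun p i =>
  if (finProdFinEquiv.symm p).1 = i ∧ (finProdFinEquiv.symm p).2 = i then 1 else 0

/-- Horizontal concatenation `[M_1 ⋯ M_N]` of a family of `n × c` matrices. -/
def hconcat {N n c : ℕ} (Ms : Fin N → Matrix (Fin n) (Fin c) ℝ) :
    Matrix (Fin n) (Fin (N * c)) ℝ := fun r p =>
  Ms (finProdFinEquiv.symm p).1 r (finProdFinEquiv.symm p).2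

/-- The stochastic lifted matrix `(L̃ ⊗ I_n)(I_{ℓMN} ⊗ M̃)((I_{ℓM} ⊗ Φ_N) ⊗ I_c)` where
`M̃ = [M_1 ⋯ M_N]` is the horizontal concatenation of the mode matrices (of size `n × c`). -/
def liftedStoch (ℓ M N n c : ℕ) (Lt : Matrix (Fin N) (Fin (ℓ * (M * N))) ℝ)
    (Ms : Fin N → Matrix (Fin n) (Fin c) ℝ) :
    Matrix (Fin (N * n)) (Fin (ℓ * M * N * c)) ℝ :=
  kron Lt (1 : Matrix (Fin n) (Fin n) ℝ) *
    kron (1 : Matrix (Fin (ℓ * (M * N))) (Fin (ℓ * (M * N))) ℝ) (hconcat Ms) *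
    castM (by ring) (by ring)
      (kron (kron (1 : Matrix (Fin (ℓ * M)) (Fin (ℓ * M)) ℝ) (powerReducing N))
        (1 : Matrix (Fin c) (Fin c) ℝ))

/-!
With `e := (i, γ, θ)`, the power-reducing matrix duplicates the mode:
`((I ⊗ Φ_N) ⊗ I)(δ^i ⊗ δ^γ ⊗ δ^θ ⊗ v) = δ_{ℓMN}^e ⊗ δ^θ ⊗ v`. The second copy of `δ^θ` makes
`I ⊗ M̃` select the mode matrix, `M̃ (δ^θ ⊗ v) = M_θ v`, and the first lets `L̃ ⊗ I` read off the
next mode, `L̃ δ_{ℓMN}^e = L_i (δ^γ ⊗ δ^θ) = δ^{f_i(γ,θ)}`. Each step is the mixed-product rule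
`(A ⊗ B)(C ⊗ D) = AC ⊗ BD`, and the three terms add up by linearity of `δ ⊗ -`.
-/

@[simp]
lemma eVec_apply (k : ℕ) (i j : Fin k) (z : Fin 1) : eVec k i j z = if j = i then 1 else 0 := rfl

@[simp]
lemma colM_apply {k : ℕ} (x : Fin k → ℝ) (j : Fin k) (z : Fin 1) : colM x j z = x j := rfl

@[simp]
lemma kron_apply_finProdFinEquiv {a b c d : ℕ} (A : Matrix (Fin a) (Fin b) ℝ)
    (B : Matrix (Fin c) (Fin d) ℝ) (i : Fin a) (j : Fin b) (k : Fin c) (l : Fin d) :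
    kron A B (finProdFinEquiv (i, k)) (finProdFinEquiv (j, l)) = A i j * B k l := by
  simp [kron]

lemma sum_fin_mul {a b : ℕ} (g : Fin (a * b) → ℝ) :
    ∑ t, g t = ∑ i : Fin a, ∑ j : Fin b, g (finProdFinEquiv (i, j)) := by
  rw [← finProdFinEquiv.sum_comp g, Fintype.sum_prod_type]

lemma kron_mul_kron {a b c d e f : ℕ} (A : Matrix (Fin a) (Fin b) ℝ)
    (B : Matrix (Fin c) (Fin d) ℝ) (C : Matrix (Fin b) (Fin e) ℝ) (D : Matrix (Fin d) (Fin f) ℝ) :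
    kron A B * kron C D = kron (A * C) (B * D) := by
  ext p q
  obtain ⟨⟨i, k⟩, rfl⟩ := finProdFinEquiv.surjective p
  obtain ⟨⟨j, l⟩, rfl⟩ := finProdFinEquiv.surjective q
  simp only [mul_apply, sum_fin_mul, kron_apply_finProdFinEquiv, Finset.sum_mul_sum]
  exact Finset.sum_congr rfl fun _ _ => Finset.sum_congr rfl fun _ _ => mul_mul_mul_comm _ _ _ _

lemma kron_add {a b c d : ℕ} (A : Matrix (Fin a) (Fin b) ℝ) (B C : Matrix (Fin c) (Fin d) ℝ) :
    kron A (B + C) = kron A B + kron A C := by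
  ext p q
  simp [kron, mul_add]

lemma colM_add {k : ℕ} (x y : Fin k → ℝ) : colM (x + y) = colM x + colM y := rfl

lemma mul_colM {a b : ℕ} (A : Matrix (Fin a) (Fin b) ℝ) (v : Fin b → ℝ) :
    A * colM v = colM (A *ᵥ v) := by
  ext i j
  simp [colM, mul_apply, mulVec, dotProduct]

-- Here and below, the column dimensions `1 * 1` and `1` are identified definitionally.
lemma eVec_finProdFinEquiv {a b : ℕ} (i : Fin a) (j : Fin b) :
    eVec (a * b) (finProdFinEquiv (i, j)) = kron (eVec a i) (eVec b j) := by
  ext p z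
  obtain ⟨⟨i', j'⟩, rfl⟩ := finProdFinEquiv.surjective p
  simp [kron, eVec, ← ite_and, and_comm]

lemma powerReducing_mul_eVec (N : ℕ) (θ : Fin N) :
    powerReducing N * eVec N θ = kron (eVec N θ) (eVec N θ) := by
  ext p z
  obtain ⟨⟨s, t⟩, rfl⟩ := finProdFinEquiv.surjective p
  simp only [powerReducing, kron, eVec, mul_apply, Equiv.symm_apply_apply, mul_ite, mul_one,
    mul_zero, Finset.sum_ite_eq', Finset.mem_univ, if_true]
  split_ifs <;> simp_all

lemma hconcat_mul_kron_eVec {N n c : ℕ} (Ms : Fin N → Matrix (Fin n) (Fin c) ℝ) (θ : Fin N)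
    (X : Matrix (Fin c) (Fin 1) ℝ) :
    hconcat Ms * kron (eVec N θ) X = Ms θ * X := by
  ext a z
  have hz : (finProdFinEquiv.symm z).2 = z := Subsingleton.elim _ _
  simp only [mul_apply, sum_fin_mul, hconcat, kron, eVec, Equiv.symm_apply_apply, hz]
  simp

lemma castM_mul {a b c e : ℕ} (h : a = b) (h' : c = c) (A : Matrix (Fin a) (Fin c) ℝ)
    (B : Matrix (Fin c) (Fin e) ℝ) : castM h h' A * B = castM h rfl (A * B) := rfl

lemma kron_one_powerReducing_mul_kron_eVec {ℓ M N c : ℕ}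
    (hS : ℓ * M * (N * N) * c = ℓ * (M * N) * (N * c))
    (h₁ : ℓ * (M * (N * c)) = ℓ * M * N * c) (h₂ : 1 * (1 * (1 * 1)) = 1)
    (i : Fin ℓ) (γ : Fin M) (θ : Fin N) (v : Fin c → ℝ) :
    castM hS rfl (kron (kron (1 : Matrix (Fin (ℓ * M)) (Fin (ℓ * M)) ℝ) (powerReducing N))
        (1 : Matrix (Fin c) (Fin c) ℝ)) *
      castM h₁ h₂ (kron (eVec ℓ i) (kron (eVec M γ) (kron (eVec N θ) (colM v)))) =
    kron (eVec (ℓ * (M * N)) (finProdFinEquiv (i, finProdFinEquiv (γ, θ))))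
      (kron (eVec N θ) (colM v)) := by
  have hvec : castM h₁ h₂ (kron (eVec ℓ i) (kron (eVec M γ) (kron (eVec N θ) (colM v)))) =
      kron (kron (kron (eVec ℓ i) (eVec M γ)) (eVec N θ)) (colM v) := by
    ext p z
    obtain ⟨⟨p, t⟩, rfl⟩ := finProdFinEquiv.surjective p
    obtain ⟨⟨p, θ'⟩, rfl⟩ := finProdFinEquiv.surjective p
    obtain ⟨⟨i', γ'⟩, rfl⟩ := finProdFinEquiv.surjective p
    have hidx :
        finCongr h₁.symm (finProdFinEquiv (finProdFinEquiv (finProdFinEquiv (i', γ'), θ'), t)) =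
          finProdFinEquiv (i', finProdFinEquiv (γ', finProdFinEquiv (θ', t))) := by
      ext
      simp only [finCongr_apply, Fin.val_cast, finProdFinEquiv_apply_val]
      ring
    simp only [castM, hidx, kron, Equiv.symm_apply_apply, eVec_apply, colM_apply]
    ring
  rw [hvec, castM_mul, kron_mul_kron, kron_mul_kron, Matrix.one_mul, Matrix.one_mul,
    powerReducing_mul_eVec]
  ext p z
  obtain ⟨⟨p, s⟩, rfl⟩ := finProdFinEquiv.surjective p
  obtain ⟨⟨i', p⟩, rfl⟩ := finProdFinEquiv.surjective p
  obtain ⟨⟨γ', θ'⟩, rfl⟩ := finProdFinEquiv.surjective p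
  obtain ⟨⟨s, t⟩, rfl⟩ := finProdFinEquiv.surjective s
  have hidx : finCongr hS.symm (finProdFinEquiv (finProdFinEquiv (i', finProdFinEquiv (γ', θ')),
      finProdFinEquiv (s, t))) = finProdFinEquiv
        (finProdFinEquiv (finProdFinEquiv (i', γ'), finProdFinEquiv (θ', s)), t) := by
    ext
    simp only [finCongr_apply, Fin.val_cast, finProdFinEquiv_apply_val]
    ring
  simp only [castM, hidx, kron, Equiv.symm_apply_apply, eVec_apply, colM_apply,
    EmbeddingLike.apply_eq_iff_eq, Prod.mk.injEq]
  split_ifs <;> simp_all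

lemma kron_one_hconcat_mul_kron_eVec {K N n c : ℕ} (Ms : Fin N → Matrix (Fin n) (Fin c) ℝ)
    (k : Fin K) (θ : Fin N) (v : Fin c → ℝ) :
    kron (1 : Matrix (Fin K) (Fin K) ℝ) (hconcat Ms) * kron (eVec K k) (kron (eVec N θ) (colM v)) =
      kron (eVec K k) (colM (Ms θ *ᵥ v)) := by
  rw [kron_mul_kron, Matrix.one_mul, hconcat_mul_kron_eVec, mul_colM]

lemma kron_hconcat_one_mul_kron_eVec {ℓ M N n p : ℕ} (L : Fin ℓ → Matrix (Fin N) (Fin (M * N)) ℝ)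
    {i : Fin ℓ} {γ : Fin M} {θ : Fin N} {j : Fin N}
    (hL : L i * kron (eVec M γ) (eVec N θ) = eVec N j) (Y : Matrix (Fin n) (Fin p) ℝ) :
    kron (hconcat L) (1 : Matrix (Fin n) (Fin n) ℝ) *
        kron (eVec (ℓ * (M * N)) (finProdFinEquiv (i, finProdFinEquiv (γ, θ)))) Y =
      kron (eVec N j) Y := by
  rw [kron_mul_kron, Matrix.one_mul, eVec_finProdFinEquiv, hconcat_mul_kron_eVec,
    eVec_finProdFinEquiv, hL]

-- The outer products in `liftedStoch` (and in the main statement) elaborate with the defeq but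
-- syntactically different multiplication of `CStarMatrix`, which `Matrix` lemmas do not match.
lemma liftedStoch_eq_mul (ℓ M N n c : ℕ) (Lt : Matrix (Fin N) (Fin (ℓ * (M * N))) ℝ)
    (Ms : Fin N → Matrix (Fin n) (Fin c) ℝ) :
    liftedStoch ℓ M N n c Lt Ms =
      kron Lt (1 : Matrix (Fin n) (Fin n) ℝ) *
        (kron (1 : Matrix (Fin (ℓ * (M * N))) (Fin (ℓ * (M * N))) ℝ) (hconcat Ms) *
          castM (b := ℓ * (M * N) * (N * c)) (d := ℓ * M * N * c) (by ring) rfl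
            (kron (kron (1 : Matrix (Fin (ℓ * M)) (Fin (ℓ * M)) ℝ) (powerReducing N))
              (1 : Matrix (Fin c) (Fin c) ℝ))) :=
  Matrix.mul_assoc _ _ _

lemma liftedStoch_hconcat_mul_kron_eVec {ℓ M N n c : ℕ} (L : Fin ℓ → Matrix (Fin N) (Fin (M * N)) ℝ)
    (Ms : Fin N → Matrix (Fin n) (Fin c) ℝ) {i : Fin ℓ} {γ : Fin M} {θ : Fin N} {j : Fin N}
    (hL : L i * kron (eVec M γ) (eVec N θ) = eVec N j) (v : Fin c → ℝ)
    (h₁ : ℓ * (M * (N * c)) = ℓ * M * N * c) (h₂ : 1 * (1 * (1 * 1)) = 1) :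
    liftedStoch ℓ M N n c (hconcat L) Ms *
        castM h₁ h₂ (kron (eVec ℓ i) (kron (eVec M γ) (kron (eVec N θ) (colM v)))) =
      kron (eVec N j) (colM (Ms θ *ᵥ v)) := by
  rw [liftedStoch_eq_mul, Matrix.mul_assoc, Matrix.mul_assoc, kron_one_powerReducing_mul_kron_eVec,
    kron_one_hconcat_mul_kron_eVec, kron_hconcat_one_mul_kron_eVec L hL]

/-- **Algebraic embedding of the stochastic switched system**: if `L_i` is the structure
matrix of `f_i : Fin M × Fin N → Fin N` and `L̃ = [L_1 ⋯ L_ℓ]`, then with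
`𝐀̃ = (L̃ ⊗ I_n)(I_{ℓMN} ⊗ Ã)((I_{ℓM} ⊗ Φ_N) ⊗ I_n)` (and similarly `𝐁̃`, `𝐅̃`), for all
`i, γ, θ, x, u, w`:
`δ_N^{f_i(γ,θ)} ⊗ (A_θx + B_θu + F_θw)
  = 𝐀̃(δ_ℓ^i ⊗ δ_M^γ ⊗ δ_N^θ ⊗ x) + 𝐁̃(δ_ℓ^i ⊗ δ_M^γ ⊗ δ_N^θ ⊗ u)
    + 𝐅̃(δ_ℓ^i ⊗ δ_M^γ ⊗ δ_N^θ ⊗ w)`. -/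
theorem stochastic_lifted_dynamics (ℓ M N n m r : ℕ)
    (f : Fin ℓ → Fin M × Fin N → Fin N)
    (L : Fin ℓ → Matrix (Fin N) (Fin (M * N)) ℝ)
    (hLf : ∀ (i : Fin ℓ) (γ : Fin M) (θ : Fin N),
      L i * castM rfl (one_mul 1) (kron (eVec M γ) (eVec N θ)) = eVec N (f i (γ, θ)))
    (Lt : Matrix (Fin N) (Fin (ℓ * (M * N))) ℝ) (hLt : Lt = hconcat L)
    (A : Fin N → Matrix (Fin n) (Fin n) ℝ) (B : Fin N → Matrix (Fin n) (Fin m) ℝ)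
    (F : Fin N → Matrix (Fin n) (Fin r) ℝ)
    (i : Fin ℓ) (γ : Fin M) (θ : Fin N) (x : Fin n → ℝ) (u : Fin m → ℝ) (w : Fin r → ℝ) :
    castM rfl (one_mul 1)
        (kron (eVec N (f i (γ, θ))) (colM (A θ *ᵥ x + B θ *ᵥ u + F θ *ᵥ w))) =
      liftedStoch ℓ M N n n Lt A *
          castM (by ring) (by norm_num)
            (kron (eVec ℓ i) (kron (eVec M γ) (kron (eVec N θ) (colM x)))) +
        liftedStoch ℓ M N n m Lt B *
          castM (by ring) (by norm_num)
            (kron (eVec ℓ i) (kron (eVec M γ) (kron (eVec N θ) (colM u)))) +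
        liftedStoch ℓ M N n r Lt F *
          castM (by ring) (by norm_num)
            (kron (eVec ℓ i) (kron (eVec M γ) (kron (eVec N θ) (colM w)))) := by
  subst hLt
  have hx := liftedStoch_hconcat_mul_kron_eVec L A (hLf i γ θ) x (by ring) (by norm_num)
  have hu := liftedStoch_hconcat_mul_kron_eVec L B (hLf i γ θ) u (by ring) (by norm_num)
  have hw := liftedStoch_hconcat_mul_kron_eVec L F (hLf i γ θ) w (by ring) (by norm_num)
  rw [colM_add, colM_add, kron_add, kron_add, ← hx, ← hu, ← hw]
  -- `castM rfl (one_mul 1)` and the `CStarMatrix` products both unfold to the plain ones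
  rfl
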